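/- For every finite connected poset P, the coproduct δ satisfies the left non-coassociative permutative (NAP) identity (id ⊗ δ)∘δ (P) = τ¹²∘(id ⊗ δ)∘δ (P), where τ¹² swaps the first two tensor factors. Explicitly, the element (1/|min(P)|) Σ_{I ◎ P} (1/|min(P\I)|) Σ_{J ◎ (P\I)} I ⊗ J ⊗ ((P\I)\J) of V ⊗ V ⊗ V is invariant under exchanging the first two tensor factors, where V is the ℚ-vector space with basis the finite connected posets on subsets of the ground set of P. -/

import Mathlib

open scoped Classical

/-- A finite poset on a subset (`carrier`) of an ambient type `α`. -/
structure FinPoset (α : Type*) where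
  carrier : Finset α
  le : α → α → Prop
  mem_of_le : ∀ ⦃x y⦄, le x y → x ∈ carrier ∧ y ∈ carrier
  le_refl : ∀ x ∈ carrier, le x x
  le_trans : ∀ ⦃x y z⦄, le x y → le y z → le x z
  le_antisymm : ∀ ⦃x y⦄, le x y → le y x → x = y

namespace FinPoset

variable {α : Type*} [DecidableEq α]

/-- The strict order `x <_P y`. -/
def lt (P : FinPoset α) (x y : α) : Prop := P.le x y ∧ x ≠ y

/-- `min(P)`: the set of minimal elements of `P`. -/
noncomputable def minSet (P : FinPoset α) : Finset α :=
  P.carrier.filter (fun x => ∀ y, P.le y x → y = x)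

/-- Connectivity of a subset `S`, for the graph with edges between comparable pairs. -/
def ConnOn (P : FinPoset α) (S : Set α) : Prop :=
  ∀ x ∈ S, ∀ y ∈ S,
    Relation.ReflTransGen (fun a b => a ∈ S ∧ b ∈ S ∧ (P.le a b ∨ P.le b a)) x y

/-- A finite poset is connected if it is nonempty and any two elements are linked by a
chain of comparable pairs. -/
def Connected (P : FinPoset α) : Prop :=
  P.carrier.Nonempty ∧ P.ConnOn ↑P.carrier

/-- `I` is a connected component of `S` (for the comparability graph of `P`). -/
def IsCC (P : FinPoset α) (S I : Set α) : Prop :=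
  I.Nonempty ∧ I ⊆ S ∧ P.ConnOn I ∧
    ∀ x ∈ I, ∀ y ∈ S, (P.le x y ∨ P.le y x) → y ∈ I

/-- `I_- = {x ∈ P \ I : ∃ y ∈ I, x ≤_P y}`. -/
noncomputable def below (P : FinPoset α) (I : Finset α) : Finset α :=
  (P.carrier \ I).filter (fun x => ∃ y ∈ I, P.le x y)

/-- `I ◎ P` : `I_-` is a singleton `{w}` with `w ∈ min(P)`, and `I` is a connected
component of `{x ∈ P : w <_P x}`. -/
def Circ (P : FinPoset α) (I : Finset α) : Prop :=
  ∃ w, P.below I = {w} ∧ w ∈ P.minSet ∧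
    P.IsCC {x | x ∈ P.carrier ∧ P.lt w x} ↑I

/-- The induced poset on a subset `S`. -/
def restrict (P : FinPoset α) (S : Finset α) : FinPoset α where
  carrier := P.carrier ∩ S
  le x y := P.le x y ∧ x ∈ S ∧ y ∈ S
  mem_of_le := by
    intro x y h
    rcases P.mem_of_le h.1 with ⟨hx, hy⟩
    exact ⟨Finset.mem_inter.2 ⟨hx, h.2.1⟩, Finset.mem_inter.2 ⟨hy, h.2.2⟩⟩
  le_refl := by
    intro x hx
    rcases Finset.mem_inter.1 hx with ⟨h1, h2⟩
    exact ⟨P.le_refl x h1, h2, h2⟩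
  le_trans := by
    rintro x y z ⟨h1, hx, hy⟩ ⟨h2, _, hz⟩
    exact ⟨P.le_trans h1 h2, hx, hz⟩
  le_antisymm := by
    rintro x y ⟨h1, _, _⟩ ⟨h2, _, _⟩
    exact P.le_antisymm h1 h2

/-- The grafting `P ↘_v Q` of `P` above the vertex `v` of `Q` (auxiliary version, with
the disjointness hypotheses as arguments). -/
def graftAux (P Q : FinPoset α) (v : α) (hd : Disjoint P.carrier Q.carrier)
    (hv : v ∈ Q.carrier) : FinPoset α where
  carrier := P.carrier ∪ Q.carrier
  le x y := P.le x y ∨ Q.le x y ∨ (Q.le x v ∧ y ∈ P.carrier)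
  mem_of_le := by
    rintro x y (h | h | ⟨h1, h2⟩)
    · rcases P.mem_of_le h with ⟨hx, hy⟩
      exact ⟨Finset.mem_union_left _ hx, Finset.mem_union_left _ hy⟩
    · rcases Q.mem_of_le h with ⟨hx, hy⟩
      exact ⟨Finset.mem_union_right _ hx, Finset.mem_union_right _ hy⟩
    · exact ⟨Finset.mem_union_right _ (Q.mem_of_le h1).1, Finset.mem_union_left _ h2⟩
  le_refl := by
    intro x hx
    rcases Finset.mem_union.1 hx with h | h
    · exact Or.inl (P.le_refl x h)
    · exact Or.inr (Or.inl (Q.le_refl x h))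
  le_trans := by
    rintro x y z (h1 | h1 | ⟨h1, h1'⟩) (h2 | h2 | ⟨h2, h2'⟩)
    · exact Or.inl (P.le_trans h1 h2)
    · exact absurd (Q.mem_of_le h2).1 (Finset.disjoint_left.1 hd (P.mem_of_le h1).2)
    · exact absurd (Q.mem_of_le h2).1 (Finset.disjoint_left.1 hd (P.mem_of_le h1).2)
    · exact absurd (P.mem_of_le h2).1 (Finset.disjoint_right.1 hd (Q.mem_of_le h1).2)
    · exact Or.inr (Or.inl (Q.le_trans h1 h2))
    · exact Or.inr (Or.inr ⟨Q.le_trans h1 h2, h2'⟩)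
    · exact Or.inr (Or.inr ⟨h1, (P.mem_of_le h2).2⟩)
    · exact absurd (Q.mem_of_le h2).1 (Finset.disjoint_left.1 hd h1')
    · exact absurd (Q.mem_of_le h2).1 (Finset.disjoint_left.1 hd h1')
  le_antisymm := by
    rintro x y (h1 | h1 | ⟨h1, h1'⟩) (h2 | h2 | ⟨h2, h2'⟩)
    · exact P.le_antisymm h1 h2
    · exact absurd (Q.mem_of_le h2).1 (Finset.disjoint_left.1 hd (P.mem_of_le h1).2)
    · exact absurd (Q.mem_of_le h2).1 (Finset.disjoint_left.1 hd (P.mem_of_le h1).2)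
    · exact absurd (P.mem_of_le h2).1 (Finset.disjoint_right.1 hd (Q.mem_of_le h1).2)
    · exact Q.le_antisymm h1 h2
    · exact absurd (Q.mem_of_le h1).1 (Finset.disjoint_left.1 hd h2')
    · exact absurd (P.mem_of_le h2).2 (Finset.disjoint_right.1 hd (Q.mem_of_le h1).1)
    · exact absurd (Q.mem_of_le h2).1 (Finset.disjoint_left.1 hd h1')
    · exact absurd (Q.mem_of_le h1).1 (Finset.disjoint_left.1 hd h2')
  
/-- The grafting `P ↘_v Q` of `P` above the vertex `v` of `Q`: the poset on
`X₁ ⊔ X₂` restricting to `P` on `X₁` and to `Q` on `X₂`, with `q ≤ p` for `q ∈ X₂`,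
`p ∈ X₁` iff `q ≤_Q v`.  (Junk value when the carriers are not disjoint or `v ∉ Q`.) -/
noncomputable def graft (P Q : FinPoset α) (v : α) : FinPoset α :=
  if h : Disjoint P.carrier Q.carrier ∧ v ∈ Q.carrier then P.graftAux Q v h.1 h.2 else P

/-- The set of subsets `I` of the carrier with `I ◎ P`. -/
noncomputable def circSet (P : FinPoset α) : Finset (Finset α) :=
  P.carrier.powerset.filter (fun I => P.Circ I)

/-- Order isomorphisms from `A` to `B`, encoded as maps `α → α` that are the identity
outside of the carrier of `A`. -/
def Isos (A B : FinPoset α) : Set (α → α) :=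
  {f | Set.BijOn f ↑A.carrier ↑B.carrier ∧
    (∀ x ∈ A.carrier, ∀ y ∈ A.carrier, (A.le x y ↔ B.le (f x) (f y))) ∧
    ∀ x, x ∉ A.carrier → f x = x}

/-- `⟨A, B⟩`: the number of order isomorphisms from `A` to `B`. -/
noncomputable def pairing (A B : FinPoset α) : ℕ := Nat.card ↥(Isos A B)

/-- The NAP coproduct `δ(P) = (1/|min(P)|) Σ_{I ◎ P} I ⊗ (P \ I)`, with values in the
rational vector space spanned by pairs of finite posets. -/
noncomputable def delta (P : FinPoset α) : (FinPoset α × FinPoset α) →₀ ℚ :=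
  ((P.minSet.card : ℚ))⁻¹ • ∑ I ∈ P.circSet,
    Finsupp.single (P.restrict I, P.restrict (P.carrier \ I)) (1 : ℚ)

end FinPoset

/-!
Each `I ◎ P` is an up-set of `P` containing no minimal element, so `min (P \ I) = min P` and both
sides are `|min P|⁻²` times a sum over the pairs `(I, J)` with `I ◎ P` and `J ◎ P \ I`. Deleting
an up-set `U` from `P` does not affect `I ◎ ·` for `I` disjoint from `U` and not below any element
of `U`. No element of `J` lies below `I`: it would be in `I_- = {w}`, and the minimal `w` is not
in `J`. Hence `J ◎ P`, and then `I ◎ P \ J`, so `(I, J) ↦ (J, I)` is an involution of the index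
set; as `(P \ I) \ J = (P \ J) \ I`, it carries one side onto the other.
-/

namespace FinPoset

attribute [ext] FinPoset

section

variable {α : Type*} {P : FinPoset α}

lemma mem_minSet {x : α} : x ∈ P.minSet ↔ x ∈ P.carrier ∧ ∀ y, P.le y x → y = x := by
  simp [minSet]

lemma lt_of_lt_of_le {x y z : α} (hxy : P.lt x y) (hyz : P.le y z) : P.lt x z :=
  ⟨P.le_trans hxy.1 hyz, by rintro rfl; exact hxy.2 (P.le_antisymm hxy.1 hyz)⟩

def IsUpper (P : FinPoset α) (U : Finset α) : Prop := ∀ ⦃x y⦄, x ∈ U → P.le x y → y ∈ U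

lemma IsCC.subset {T T' I : Set α} (h : P.IsCC T I) (hI : I ⊆ T') (hT : T' ⊆ T) :
    P.IsCC T' I :=
  ⟨h.1, hI, h.2.2.1, fun x hx y hy => h.2.2.2 x hx y (hT hy)⟩

lemma IsCC.extend {T T' I : Set α} (h : P.IsCC T' I) (hT : T' ⊆ T)
    (hsep : ∀ x ∈ I, ∀ y ∈ T, y ∉ T' → ¬(P.le x y ∨ P.le y x)) : P.IsCC T I :=
  ⟨h.1, h.2.1.trans hT, h.2.2.1, fun x hx y hy hxy =>
    h.2.2.2 x hx y (by_contra fun hy' => hsep x hx y hy hy' hxy) hxy⟩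

end

variable {α : Type*} [DecidableEq α] {P : FinPoset α}

lemma mem_below {I : Finset α} {x : α} :
    x ∈ P.below I ↔ (x ∈ P.carrier ∧ x ∉ I) ∧ ∃ y ∈ I, P.le x y := by
  simp [below]

lemma restrict_restrict {S T : Finset α} (h : T ⊆ S) :
    (P.restrict S).restrict T = P.restrict T := by
  ext x y
  · simp only [restrict, Finset.mem_inter]
    exact ⟨fun h' => ⟨h'.1.1, h'.2⟩, fun h' => ⟨⟨h'.1, h h'.2⟩, h'.2⟩⟩
  · exact ⟨fun ⟨⟨hxy, _⟩, hT⟩ => ⟨hxy, hT⟩, fun ⟨hxy, hx, hy⟩ => ⟨⟨hxy, h hx, h hy⟩, hx, hy⟩⟩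

lemma connOn_restrict_iff {S : Finset α} {I : Set α} (hI : I ⊆ S) :
    (P.restrict S).ConnOn I ↔ P.ConnOn I := by
  have hrel : (fun a b => a ∈ I ∧ b ∈ I ∧ ((P.restrict S).le a b ∨ (P.restrict S).le b a)) =
      fun a b => a ∈ I ∧ b ∈ I ∧ (P.le a b ∨ P.le b a) := by
    ext a b
    refine and_congr_right fun ha => and_congr_right fun hb => ?_
    have haS : a ∈ S := hI ha
    have hbS : b ∈ S := hI hb
    simp only [restrict, haS, hbS, and_true]
  simp only [ConnOn, hrel]

lemma isCC_restrict_iff {S : Finset α} {T I : Set α} (hT : T ⊆ S) :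
    (P.restrict S).IsCC T I ↔ P.IsCC T I := by
  unfold IsCC
  refine and_congr_right fun _ => and_congr_right fun hIT => ?_
  rw [connOn_restrict_iff (hIT.trans hT)]
  refine and_congr_right fun _ => forall₂_congr fun x hx => forall₂_congr fun y hy => ?_
  have hxS : x ∈ S := hT (hIT hx)
  have hyS : y ∈ S := hT hy
  simp only [restrict, hxS, hyS, and_true]

lemma setOf_restrict_lt {S : Finset α} {w : α} (hw : w ∈ S) :
    {x | x ∈ (P.restrict S).carrier ∧ (P.restrict S).lt w x} =
      {x | x ∈ P.carrier ∧ P.lt w x} ∩ ↑S := by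
  ext x
  simp only [restrict, lt, Set.mem_ofPred_eq, Set.mem_inter_iff, Finset.mem_inter,
    Finset.mem_coe, hw]
  tauto

lemma minSet_restrict_sdiff {U : Finset α} (hU : P.IsUpper U) :
    (P.restrict (P.carrier \ U)).minSet = P.minSet \ U := by
  ext x
  simp only [mem_minSet, restrict, Finset.mem_sdiff, Finset.mem_inter]
  constructor
  · rintro ⟨⟨hx, -, hxU⟩, hmin⟩
    exact ⟨⟨hx, fun y hyx => hmin y ⟨hyx, ⟨(P.mem_of_le hyx).1, fun hyU => hxU (hU hyU hyx)⟩,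
      hx, hxU⟩⟩, hxU⟩
  · rintro ⟨⟨hx, hmin⟩, hxU⟩
    exact ⟨⟨hx, hx, hxU⟩, fun y hyx => hmin y hyx.1⟩

lemma below_restrict_sdiff {U I : Finset α} (hU : P.IsUpper U) (hI : I ⊆ P.carrier \ U) :
    (P.restrict (P.carrier \ U)).below I = P.below I := by
  ext x
  simp only [mem_below, restrict, Finset.mem_sdiff, Finset.mem_inter]
  constructor
  · rintro ⟨⟨⟨hx, -⟩, hxI⟩, y, hy, hxy, -⟩
    exact ⟨⟨hx, hxI⟩, y, hy, hxy⟩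
  · rintro ⟨⟨hx, hxI⟩, y, hy, hxy⟩
    have hxU : x ∉ U := fun hxU => (Finset.mem_sdiff.1 (hI hy)).2 (hU hxU hxy)
    exact ⟨⟨⟨hx, hx, hxU⟩, hxI⟩, y, hy, hxy, ⟨hx, hxU⟩, Finset.mem_sdiff.1 (hI hy)⟩

lemma circ_restrict_sdiff_iff {U I : Finset α} (hU : P.IsUpper U) (hI : I ⊆ P.carrier \ U)
    (hsep : ∀ x ∈ I, ∀ y ∈ U, ¬P.le x y) :
    (P.restrict (P.carrier \ U)).Circ I ↔ P.Circ I := by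
  have hwS : ∀ w, P.below I = {w} → w ∈ P.carrier \ U := by
    intro w hb
    obtain ⟨⟨hw, -⟩, y, hy, hwy⟩ := mem_below.1 (hb ▸ Finset.mem_singleton_self w)
    exact Finset.mem_sdiff.2 ⟨hw, fun hwU => (Finset.mem_sdiff.1 (hI hy)).2 (hU hwU hwy)⟩
  unfold Circ
  rw [below_restrict_sdiff hU hI, minSet_restrict_sdiff hU]
  refine exists_congr fun w => and_congr_right fun hb => ?_
  rw [Finset.mem_sdiff, and_iff_left (Finset.mem_sdiff.1 (hwS w hb)).2,
    setOf_restrict_lt (hwS w hb), isCC_restrict_iff Set.inter_subset_right]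
  refine and_congr_right fun _ => ⟨fun h => h.extend Set.inter_subset_left ?_,
    fun h => h.subset (fun x hx => ⟨h.2.1 hx, hI hx⟩) Set.inter_subset_left⟩
  intro x hx y hyT hyS
  have hyU : y ∈ U := by
    by_contra hyU
    exact hyS ⟨hyT, Finset.mem_sdiff.2 ⟨hyT.1, hyU⟩⟩
  rintro (hxy | hyx)
  · exact hsep x hx y hyU hxy
  · exact (Finset.mem_sdiff.1 (hI hx)).2 (hU hyU hyx)

namespace Circ

variable {I : Finset α}

lemma subset_carrier (hI : P.Circ I) : I ⊆ P.carrier := by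
  obtain ⟨w, -, -, hcc⟩ := hI
  exact fun x hx => (hcc.2.1 hx).1

lemma isUpper (hI : P.Circ I) : P.IsUpper I := by
  obtain ⟨w, -, -, hcc⟩ := hI
  intro x y hx hxy
  exact hcc.2.2.2 x hx y ⟨(P.mem_of_le hxy).2, lt_of_lt_of_le (hcc.2.1 hx).2 hxy⟩ (Or.inl hxy)

lemma notMem_of_mem_minSet (hI : P.Circ I) {x : α} (hx : x ∈ P.minSet) : x ∉ I := by
  obtain ⟨w, -, -, hcc⟩ := hI
  intro hxI
  have hwx := (hcc.2.1 hxI).2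
  exact hwx.2 ((mem_minSet.1 hx).2 w hwx.1)

lemma minSet_restrict_sdiff (hI : P.Circ I) :
    (P.restrict (P.carrier \ I)).minSet = P.minSet := by
  rw [FinPoset.minSet_restrict_sdiff hI.isUpper,
    Finset.sdiff_eq_self_of_disjoint (Finset.disjoint_left.2 fun _ => hI.notMem_of_mem_minSet)]

lemma swap {J : Finset α} (hI : P.Circ I) (hJ : (P.restrict (P.carrier \ I)).Circ J) :
    P.Circ J ∧ (P.restrict (P.carrier \ J)).Circ I := by
  have hJI : J ⊆ P.carrier \ I := fun x hx => (Finset.mem_inter.1 (hJ.subset_carrier hx)).2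
  obtain ⟨w, hbI, hwmin, -⟩ := id hI
  -- an element of `J` below `I` lies in `I_- = {w}`, but `w` is minimal and hence not in `J`
  have hsep : ∀ x ∈ J, ∀ y ∈ I, ¬P.le x y := by
    intro x hx y hy hxy
    have hxw : x ∈ P.below I := mem_below.2 ⟨Finset.mem_sdiff.1 (hJI hx), y, hy, hxy⟩
    rw [hbI, Finset.mem_singleton] at hxw
    subst hxw
    exact hJ.notMem_of_mem_minSet (by rwa [hI.minSet_restrict_sdiff]) hx
  have hJP : P.Circ J := (circ_restrict_sdiff_iff hI.isUpper hJI hsep).1 hJ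
  have hIJ : I ⊆ P.carrier \ J := fun x hx =>
    Finset.mem_sdiff.2 ⟨hI.subset_carrier hx, fun hxJ => (Finset.mem_sdiff.1 (hJI hxJ)).2 hx⟩
  refine ⟨hJP, (circ_restrict_sdiff_iff hJP.isUpper hIJ ?_).2 hI⟩
  exact fun x hx y hy hxy => (Finset.mem_sdiff.1 (hIJ (hI.isUpper hx hxy))).2 hy

end Circ

lemma mem_circSet {I : Finset α} : I ∈ P.circSet ↔ P.Circ I := by
  simpa [circSet] using fun h => Circ.subset_carrier h

noncomputable def circPairs (P : FinPoset α) : Finset ((_ : Finset α) × Finset α) :=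
  P.circSet.sigma fun I => (P.restrict (P.carrier \ I)).circSet

lemma snd_subset_sdiff_fst {p : (_ : Finset α) × Finset α} (hp : p ∈ P.circPairs) :
    p.2 ⊆ P.carrier \ p.1 := by
  rw [circPairs, Finset.mem_sigma, mem_circSet, mem_circSet] at hp
  exact fun x hx => (Finset.mem_inter.1 (hp.2.subset_carrier hx)).2

lemma swap_mem_circPairs {p : (_ : Finset α) × Finset α} (hp : p ∈ P.circPairs) :
    ⟨p.2, p.1⟩ ∈ P.circPairs := by
  rw [circPairs, Finset.mem_sigma, mem_circSet, mem_circSet] at hp ⊢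
  exact hp.1.swap hp.2

lemma sum_circPairs_swap {M : Type*} [AddCommMonoid M] (f : (_ : Finset α) × Finset α → M) :
    ∑ p ∈ P.circPairs, f p = ∑ p ∈ P.circPairs, f ⟨p.2, p.1⟩ :=
  Finset.sum_nbij' (fun p => ⟨p.2, p.1⟩) (fun p => ⟨p.2, p.1⟩) (fun _ => swap_mem_circPairs)
    (fun _ => swap_mem_circPairs) (fun _ _ => rfl) (fun _ _ => rfl) (fun _ _ => rfl)

lemma sum_circSet_smul_sum_circSet {M : Type*} [AddCommMonoid M] [Module ℚ M]
    (F : Finset α → Finset α → M) :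
    ∑ I ∈ P.circSet, ((P.restrict (P.carrier \ I)).minSet.card : ℚ)⁻¹ •
        ∑ J ∈ (P.restrict (P.carrier \ I)).circSet, F I J =
      (P.minSet.card : ℚ)⁻¹ • ∑ p ∈ P.circPairs, F p.1 p.2 := by
  rw [circPairs, Finset.sum_sigma, Finset.smul_sum]
  refine Finset.sum_congr rfl fun I hI => ?_
  rw [(mem_circSet.1 hI).minSet_restrict_sdiff]

end FinPoset

theorem coproduct_nap_general {α : Type*} [DecidableEq α] (P : FinPoset α) :
    (((P.minSet.card : ℚ))⁻¹ • ∑ I ∈ P.circSet,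
      (((P.restrict (P.carrier \ I)).minSet.card : ℚ))⁻¹ •
        ∑ J ∈ (P.restrict (P.carrier \ I)).circSet,
          Finsupp.single
            (P.restrict I, (P.restrict (P.carrier \ I)).restrict J,
              (P.restrict (P.carrier \ I)).restrict ((P.carrier \ I) \ J))
            (1 : ℚ) :
        (FinPoset α × FinPoset α × FinPoset α) →₀ ℚ)
    = ((P.minSet.card : ℚ))⁻¹ • ∑ I ∈ P.circSet,
      (((P.restrict (P.carrier \ I)).minSet.card : ℚ))⁻¹ •
        ∑ J ∈ (P.restrict (P.carrier \ I)).circSet,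
          Finsupp.single
            ((P.restrict (P.carrier \ I)).restrict J, P.restrict I,
              (P.restrict (P.carrier \ I)).restrict ((P.carrier \ I) \ J))
            (1 : ℚ) := by
  simp only [FinPoset.sum_circSet_smul_sum_circSet]
  congr 2
  rw [P.sum_circPairs_swap]
  refine Finset.sum_congr rfl fun p hp => ?_
  rw [FinPoset.restrict_restrict (FinPoset.snd_subset_sdiff_fst hp),
    FinPoset.restrict_restrict (FinPoset.snd_subset_sdiff_fst (FinPoset.swap_mem_circPairs hp)),
    FinPoset.restrict_restrict Finset.sdiff_subset, FinPoset.restrict_restrict Finset.sdiff_subset,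
    sdiff_sdiff_comm]

/-- The coproduct `δ` satisfies the left NAP identity
`(id ⊗ δ) ∘ δ = τ¹² ∘ (id ⊗ δ) ∘ δ` on every finite connected poset: the element
`(1/|min(P)|) Σ_{I ◎ P} (1/|min(P\I)|) Σ_{J ◎ (P\I)} I ⊗ J ⊗ ((P\I)\J)` is invariant
under exchanging the first two tensor factors. -/
theorem coproduct_nap {α : Type*} [DecidableEq α] (P : FinPoset α) (hP : P.Connected) :
    (((P.minSet.card : ℚ))⁻¹ • ∑ I ∈ P.circSet,
      (((P.restrict (P.carrier \ I)).minSet.card : ℚ))⁻¹ •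
        ∑ J ∈ (P.restrict (P.carrier \ I)).circSet,
          Finsupp.single
            (P.restrict I, (P.restrict (P.carrier \ I)).restrict J,
              (P.restrict (P.carrier \ I)).restrict ((P.carrier \ I) \ J))
            (1 : ℚ) :
        (FinPoset α × FinPoset α × FinPoset α) →₀ ℚ)
    = ((P.minSet.card : ℚ))⁻¹ • ∑ I ∈ P.circSet,
      (((P.restrict (P.carrier \ I)).minSet.card : ℚ))⁻¹ •
        ∑ J ∈ (P.restrict (P.carrier \ I)).circSet,
          Finsupp.single
            ((P.restrict (P.carrier \ I)).restrict J, P.restrict I,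
              (P.restrict (P.carrier \ I)).restrict ((P.carrier \ I) \ J))
            (1 : ℚ) :=
  coproduct_nap_general P
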